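/- Let (X,S_X) and (Y,S_Y) be nondegenerate symmetric sets, and for each y ∈ Y let f_y : X → X be a bijection. Define S_Z on Z = X ⊔ Y by: S_Z = S_X on X × X, S_Z = S_Y on Y × Y, S_Z(x,y) = (y, f_y(x)) and S_Z(y,x) = (f_y^{-1}(x), y) for x ∈ X, y ∈ Y. Then (Z, S_Z) is a nondegenerate symmetric set if and only if: (a) every f_y is an automorphism of (X,S_X), i.e., (f_y × f_y) ∘ S_X = S_X ∘ (f_y × f_y); and (b) for all y₁, y₂ ∈ Y, writing S_Y(y₁,y₂) = (t,z), one has f_{y₂} ∘ f_{y₁} = f_z ∘ f_t. -/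

import Mathlib

/-- `(W,S)` is nondegenerate. -/
def Nondeg {W : Type*} (S : W × W → W × W) : Prop :=
  (∀ y : W, Function.Bijective fun x => (S (x, y)).2) ∧
  (∀ x : W, Function.Bijective fun y => (S (x, y)).1)

/-- `S^{12} : W³ → W³`. -/
def S12 {W : Type*} (S : W × W → W × W) : W × W × W → W × W × W :=
  fun p => ((S (p.1, p.2.1)).1, (S (p.1, p.2.1)).2, p.2.2)

/-- `S^{23} : W³ → W³`. -/
def S23 {W : Type*} (S : W × W → W × W) : W × W × W → W × W × W :=
  fun p => (p.1, (S (p.2.1, p.2.2)).1, (S (p.2.1, p.2.2)).2)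

/-- `(W,S)` is braided. -/
def Braided {W : Type*} (S : W × W → W × W) : Prop :=
  S12 S ∘ S23 S ∘ S12 S = S23 S ∘ S12 S ∘ S23 S

/-- `(W,S)` is involutive. -/
def Invol {W : Type*} (S : W × W → W × W) : Prop := S ∘ S = id

/-- The right-extension map `S_Z` on `Z = X ⊔ Y`: it restricts to `S_X` on `X × X` and
`S_Y` on `Y × Y`, and `S_Z(x,y) = (y, f_y(x))`, `S_Z(y,x) = (f_y⁻¹(x), y)` for mixed
pairs. -/
def SZright {X Y : Type*} (SX : X × X → X × X) (SY : Y × Y → Y × Y)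
    (f : Y → X ≃ X) : (X ⊕ Y) × (X ⊕ Y) → (X ⊕ Y) × (X ⊕ Y) := fun p =>
  match p with
  | (Sum.inl x, Sum.inl x') => (Sum.inl (SX (x, x')).1, Sum.inl (SX (x, x')).2)
  | (Sum.inr y, Sum.inr y') => (Sum.inr (SY (y, y')).1, Sum.inr (SY (y, y')).2)
  | (Sum.inl x, Sum.inr y) => (Sum.inr y, Sum.inl (f y x))
  | (Sum.inr y, Sum.inl x) => (Sum.inl ((f y).symm x), Sum.inr y)

/-- Proposition 2.17 (with Proposition 2.16): the formula `S_Z(x,y) = (y, f_y(x))`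
defines a right extension of `X` by `Y` (i.e., a nondegenerate symmetric set structure
on `Z = X ⊔ Y`) iff every `f_y` preserves `S_X` and `y ↦ f_y⁻¹` defines an action of
`G_Y` on `X`, i.e., `f_{y₂} ∘ f_{y₁} = f_z ∘ f_t` whenever `S_Y(y₁,y₂) = (t,z)`. -/
theorem right_extension_iff {X Y : Type*}
    (SX : X × X → X × X) (SY : Y × Y → Y × Y)
    (hndX : Nondeg SX) (hbrX : Braided SX) (hinvX : Invol SX)
    (hndY : Nondeg SY) (hbrY : Braided SY) (hinvY : Invol SY)
    (f : Y → X ≃ X) :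
    (Nondeg (SZright SX SY f) ∧ Braided (SZright SX SY f) ∧ Invol (SZright SX SY f)) ↔
      ((∀ y : Y, Prod.map (f y) (f y) ∘ SX = SX ∘ Prod.map (f y) (f y)) ∧
       (∀ y₁ y₂ : Y,
         (f y₂ : X → X) ∘ (f y₁ : X → X) =
           (f ((SY (y₁, y₂)).2) : X → X) ∘ (f ((SY (y₁, y₂)).1) : X → X))) := by

  classical
  constructor
  · rintro ⟨-, hbr, -⟩
    have hb : ∀ p, S12 (SZright SX SY f) (S23 (SZright SX SY f) (S12 (SZright SX SY f) p)) =
        S23 (SZright SX SY f) (S12 (SZright SX SY f) (S23 (SZright SX SY f) p)) :=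
      fun p => congrFun hbr p
    constructor
    · intro y
      funext p
      obtain ⟨x₁, x₂⟩ := p
      have h := hb (Sum.inl x₁, Sum.inl x₂, Sum.inr y)
      simp only [S12, S23, SZright, Prod.mk.injEq, Sum.inl.injEq, Sum.inr.injEq,
        true_and] at h
      apply Prod.ext <;> simp [h.1, h.2]
    · intro y₁ y₂
      funext x
      have h := hb (Sum.inl x, Sum.inr y₁, Sum.inr y₂)
      simp only [S12, S23, SZright, Prod.mk.injEq, Sum.inl.injEq, Sum.inr.injEq] at h
      simpa using h.2.2
  · rintro ⟨ha, hb⟩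
    have ha' : ∀ (y : Y) (p : X × X),
        SX (f y p.1, f y p.2) = (f y (SX p).1, f y (SX p).2) := by
      intro y p
      have h := congrFun (ha y) p
      simp only [Function.comp_apply, Prod.map_apply] at h
      exact h.symm
    have has : ∀ (y : Y) (a b : X),
        SX ((f y).symm a, (f y).symm b) =
          ((f y).symm (SX (a, b)).1, (f y).symm (SX (a, b)).2) := by
      intro y a b
      have h := ha' y ((f y).symm a, (f y).symm b)
      simp only [Equiv.apply_symm_apply] at h
      rw [h]
      simp
    have hb' : ∀ (y₁ y₂ : Y) (x : X),
        f y₂ (f y₁ x) = f (SY (y₁, y₂)).2 (f (SY (y₁, y₂)).1 x) :=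
      fun y₁ y₂ x => congrFun (hb y₁ y₂) x
    have hbs : ∀ (y₁ y₂ : Y) (u : X),
        (f (SY (y₁, y₂)).1).symm ((f (SY (y₁, y₂)).2).symm u) =
          (f y₁).symm ((f y₂).symm u) := by
      intro y₁ y₂ u
      apply (f y₁).injective
      apply (f y₂).injective
      rw [hb' y₁ y₂]
      simp
    have hinvX' : ∀ p : X × X, SX (SX p) = p := fun p => congrFun hinvX p
    have hinvY' : ∀ p : Y × Y, SY (SY p) = p := fun p => congrFun hinvY p
    refine ⟨⟨?_, ?_⟩, ?_, ?_⟩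
    · rintro (x' | y')
      · have he : (fun p => ((SZright SX SY f) (p, Sum.inl x')).2) =
            Sum.map (fun x => (SX (x, x')).2) id := by
          funext p; cases p <;> rfl
        rw [he]
        exact (hndX.1 x').sumMap Function.bijective_id
      · have he : (fun p => ((SZright SX SY f) (p, Sum.inr y')).2) =
            Sum.map (f y') (fun y => (SY (y, y')).2) := by
          funext p; cases p <;> rfl
        rw [he]
        exact (f y').bijective.sumMap (hndY.1 y')
    · rintro (x | y)
      · have he : (fun q => ((SZright SX SY f) (Sum.inl x, q)).1) =
            Sum.map (fun x' => (SX (x, x')).1) id := by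
          funext q; cases q <;> rfl
        rw [he]
        exact (hndX.2 x).sumMap Function.bijective_id
      · have he : (fun q => ((SZright SX SY f) (Sum.inr y, q)).1) =
            Sum.map ((f y).symm) (fun y' => (SY (y, y')).1) := by
          funext q; cases q <;> rfl
        rw [he]
        exact (f y).symm.bijective.sumMap (hndY.2 y)
    · -- Braided
      have hbX : ∀ p, S12 SX (S23 SX (S12 SX p)) = S23 SX (S12 SX (S23 SX p)) :=
        fun p => congrFun hbrX p
      have hbY : ∀ p, S12 SY (S23 SY (S12 SY p)) = S23 SY (S12 SY (S23 SY p)) :=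
        fun p => congrFun hbrY p
      funext p
      obtain ⟨a, b, c⟩ := p
      simp only [Function.comp_apply]
      rcases a with x₁ | y₁ <;> rcases b with x₂ | y₂ <;> rcases c with x₃ | y₃ <;>
        simp only [S12, S23, SZright]
      · -- lll
        have h := hbX (x₁, x₂, x₃)
        simp only [S12, S23, Prod.mk.injEq] at h
        simp only [Prod.mk.injEq, Sum.inl.injEq]
        exact h
      · -- lly
        rw [ha' y₃ (x₁, x₂)]
      · -- lyl
        have h := ha' y₂ (x₁, (f y₂).symm x₃)
        simp only [Equiv.apply_symm_apply] at h
        rw [h]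
        simp
      · -- lyy
        rw [hb' y₂ y₃ x₁]
      · -- yll
        rw [has y₁ x₂ x₃]
      · -- yxy
        have key : f (SY (y₁, y₃)).2 (f (SY (y₁, y₃)).1 ((f y₁).symm x₂)) = f y₃ x₂ := by
          rw [← hb' y₁ y₃]; simp
        simp only [Prod.mk.injEq, Sum.inl.injEq, Sum.inr.injEq, true_and, and_true]
        exact (f (SY (y₁, y₃)).2).injective (by simpa using key)
      · -- yyl
        rw [hbs y₁ y₂ x₃]
      · -- yyy
        have h := hbY (y₁, y₂, y₃)
        simp only [S12, S23, Prod.mk.injEq] at h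
        simp only [Prod.mk.injEq, Sum.inr.injEq]
        exact h
    · -- Invol
      funext p
      obtain ⟨a, b⟩ := p
      simp only [Function.comp_apply, id_eq]
      rcases a with x | y <;> rcases b with x' | y'
      · have h := hinvX' (x, x')
        simp [SZright, Prod.ext_iff] at h ⊢
        exact h
      · simp [SZright]
      · simp [SZright]
      · have h := hinvY' (y, y')
        simp [SZright, Prod.ext_iff] at h ⊢
        exact h
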